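/- An ABB̄L̄-formula φ is satisfiable over a finite interval structure if and only if the formula φ ∨ ⟨B̄⟩φ ∨ ⟨A⟩φ ∨ ⟨A⟩⟨A⟩φ belongs to the atom labeling the initial point (0,1) of some finite compass structure. -/

import Mathlib

namespace ABBL

/-- Formulas of the interval temporal logic ABB̄L̄, built from propositional
variables (of type `P`) using negation, disjunction and the unary modal
operators ⟨A⟩, ⟨B⟩, ⟨B̄⟩, ⟨L̄⟩. -/
inductive Formula (P : Type) : Type
  | atom  : P → Formula P
  | neg   : Formula P → Formula P
  | or    : Formula P → Formula P → Formula P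
  | diaA  : Formula P → Formula P
  | diaB  : Formula P → Formula P
  | diaBb : Formula P → Formula P
  | diaLb : Formula P → Formula P

variable {P : Type}

/-- The set of subformulas of a formula. -/
def subf : Formula P → Set (Formula P)
  | .atom a   => {Formula.atom a}
  | .neg ψ    => insert (Formula.neg ψ) (subf ψ)
  | .or ψ χ   => insert (Formula.or ψ χ) (subf ψ ∪ subf χ)
  | .diaA ψ   => insert (Formula.diaA ψ) (subf ψ)
  | .diaB ψ   => insert (Formula.diaB ψ) (subf ψ)
  | .diaBb ψ  => insert (Formula.diaBb ψ) (subf ψ)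
  | .diaLb ψ  => insert (Formula.diaLb ψ) (subf ψ)

/-- The number `|φ|` of subformulas of `φ`. -/
noncomputable def numSub (φ : Formula P) : ℕ := (subf φ).ncard

/-- Negation, identifying `¬¬α` with `α`. -/
def negc : Formula P → Formula P
  | .neg ψ => ψ
  | ψ      => Formula.neg ψ

/-- The closure `Cl(φ)`: all subformulas of `φ` and their negations. -/
def Cl (φ : Formula P) : Set (Formula P) := subf φ ∪ negc '' subf φ

/-- The extended closure `Cl⁺(φ)`: `Cl(φ)` together with all formulas
`⟨R⟩α` and `¬⟨R⟩α` for `R ∈ {A,B,B̄,L̄}` and `α ∈ Cl(φ)`. -/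
def Clp (φ : Formula P) : Set (Formula P) :=
  Cl φ ∪ {ψ | ∃ α ∈ Cl φ,
    ψ = Formula.diaA α ∨ ψ = Formula.neg (Formula.diaA α) ∨
    ψ = Formula.diaB α ∨ ψ = Formula.neg (Formula.diaB α) ∨
    ψ = Formula.diaBb α ∨ ψ = Formula.neg (Formula.diaBb α) ∨
    ψ = Formula.diaLb α ∨ ψ = Formula.neg (Formula.diaLb α)}

/-- A `φ`-atom: a nonempty, maximal locally consistent subset of `Cl⁺(φ)`. -/
structure IsAtom (φ : Formula P) (F : Set (Formula P)) : Prop where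
  nonempty : F.Nonempty
  subset   : F ⊆ Clp φ
  negCond  : ∀ α ∈ Clp φ, (α ∈ F ↔ negc α ∉ F)
  orCond   : ∀ α β, Formula.or α β ∈ Clp φ → (Formula.or α β ∈ F ↔ α ∈ F ∨ β ∈ F)

/-- The observables of `F`: `Obs(F) = F ∩ Cl(φ)`. -/
def Obs (φ : Formula P) (F : Set (Formula P)) : Set (Formula P) := F ∩ Cl φ

/-- The `A`-requests of `F`. -/
def ReqA (φ : Formula P) (F : Set (Formula P)) : Set (Formula P) :=
  {α | α ∈ Cl φ ∧ Formula.diaA α ∈ F}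

/-- The `B`-requests of `F`. -/
def ReqB (φ : Formula P) (F : Set (Formula P)) : Set (Formula P) :=
  {α | α ∈ Cl φ ∧ Formula.diaB α ∈ F}

/-- The `B̄`-requests of `F`. -/
def ReqBb (φ : Formula P) (F : Set (Formula P)) : Set (Formula P) :=
  {α | α ∈ Cl φ ∧ Formula.diaBb α ∈ F}

/-- The `L̄`-requests of `F`. -/
def ReqLb (φ : Formula P) (F : Set (Formula P)) : Set (Formula P) :=
  {α | α ∈ Cl φ ∧ Formula.diaLb α ∈ F}

/-- The dependency relation `F →_A G`. -/
def DepA (φ : Formula P) (F G : Set (Formula P)) : Prop :=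
  ReqA φ F = Obs φ G ∪ ReqB φ G ∪ ReqBb φ G

/-- The dependency relation `F →_B G`. -/
def DepB (φ : Formula P) (F G : Set (Formula P)) : Prop :=
  (Obs φ F ∪ ReqBb φ F ⊆ ReqBb φ G) ∧
  (ReqBb φ G ⊆ Obs φ F ∪ ReqBb φ F ∪ ReqB φ F) ∧
  (Obs φ G ∪ ReqB φ G ⊆ ReqB φ F) ∧
  (ReqB φ F ⊆ Obs φ G ∪ ReqB φ G ∪ ReqBb φ G) ∧
  ReqLb φ F = ReqLb φ G

/-- The dependency relation `F →_L̄ G`. -/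
def DepLb (φ : Formula P) (F G : Set (Formula P)) : Prop :=
  Obs φ G ∪ ReqLb φ G ⊆ ReqLb φ F

/-! ### Interval structures and semantics -/

/-- Intervals `[x,y]` with `x < y` over a linear order `O`. -/
def Interval (O : Type) [LinearOrder O] : Type := {p : O × O // p.1 < p.2}

variable {O : Type} [LinearOrder O]

/-- Allen's "meets" relation: `[x,y] A [x',y']` iff `y = x'`. -/
def relA (I J : Interval O) : Prop := I.1.2 = J.1.1

/-- Allen's "begins" relation: `[x,y] B [x',y']` iff `x = x'` and `y' < y`. -/
def relB (I J : Interval O) : Prop := I.1.1 = J.1.1 ∧ J.1.2 < I.1.2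

/-- Allen's "begun by" relation: `[x,y] B̄ [x',y']` iff `x = x'` and `y < y'`. -/
def relBb (I J : Interval O) : Prop := I.1.1 = J.1.1 ∧ I.1.2 < J.1.2

/-- Allen's "before" relation: `[x,y] L̄ [x',y']` iff `y' < x`. -/
def relLb (I J : Interval O) : Prop := J.1.2 < I.1.1

/-- Satisfaction of a formula at an interval of an interval structure
`S = (I_O, σ)`, where `σ` is the labeling with sets of propositional variables. -/
def sat (σ : Interval O → Set P) : Formula P → Interval O → Prop
  | .atom a, I  => a ∈ σ I
  | .neg ψ, I   => ¬ sat σ ψ I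
  | .or ψ χ, I  => sat σ ψ I ∨ sat σ χ I
  | .diaA ψ, I  => ∃ J, relA I J ∧ sat σ ψ J
  | .diaB ψ, I  => ∃ J, relB I J ∧ sat σ ψ J
  | .diaBb ψ, I => ∃ J, relBb I J ∧ sat σ ψ J
  | .diaLb ψ, I => ∃ J, relLb I J ∧ sat σ ψ J

/-- A linear order is strongly discrete iff there are only finitely many
points between any two points. -/
def StronglyDiscrete (O : Type) [LinearOrder O] : Prop :=
  ∀ x y : O, (Set.Ioo x y).Finite

/-- The `φ`-type of an interval: the set of formulas of `Cl⁺(φ)` true at it. -/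
def TypeS (σ : Interval O → Set P) (φ : Formula P) (I : Interval O) : Set (Formula P) :=
  {α | α ∈ Clp φ ∧ sat σ α I}

/-! ### Compass structures over a linear order -/

/-- A (consistent and fulfilling) compass `φ`-structure over a linear order `O`:
a labeling of the points `(x,y)` with `x < y` (identified with intervals) by
`φ`-atoms, satisfying consistency and fulfillment. -/
structure IsCompass (φ : Formula P) (L : Interval O → Set (Formula P)) : Prop where
  isAtom : ∀ p, IsAtom φ (L p)
  consA  : ∀ p q, relA p q → DepA φ (L p) (L q)
  consB  : ∀ p q, relB p q → DepB φ (L p) (L q)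
  consLb : ∀ p q, relLb p q → DepLb φ (L p) (L q)
  fulA   : ∀ p, ∀ α ∈ ReqA φ (L p), ∃ q, relA p q ∧ α ∈ Obs φ (L q)
  fulB   : ∀ p, ∀ α ∈ ReqB φ (L p), ∃ q, relB p q ∧ α ∈ Obs φ (L q)
  fulBb  : ∀ p, ∀ α ∈ ReqBb φ (L p), ∃ q, relBb p q ∧ α ∈ Obs φ (L q)
  fulLb  : ∀ p, ∀ α ∈ ReqLb φ (L p), ∃ q, relLb p q ∧ α ∈ Obs φ (L q)

/-! ### Finite compass structures, over `O = {0,…,N−1}` -/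

/-- A finite compass structure of size `N` (consistency conditions only):
the points are the pairs `(x,y)` with `x < y < N`, and `L` gives the labeling
by `φ`-atoms. Consistency is required for the relations `A`, `B`, `L̄`. -/
structure IsPreCompass (φ : Formula P) (N : ℕ) (L : ℕ → ℕ → Set (Formula P)) : Prop where
  isAtom : ∀ x y, x < y → y < N → IsAtom φ (L x y)
  consA  : ∀ x y z, x < y → y < z → z < N → DepA φ (L x y) (L y z)
  consB  : ∀ x z y, x < z → z < y → y < N → DepB φ (L x y) (L x z)
  consLb : ∀ u v x y, u < v → v < x → x < y → y < N → DepLb φ (L x y) (L u v)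

/-- A (consistent and fulfilling) finite compass `φ`-structure of size `N`. -/
structure IsFinCompass (φ : Formula P) (N : ℕ) (L : ℕ → ℕ → Set (Formula P))
    extends IsPreCompass φ N L : Prop where
  fulA  : ∀ x y, x < y → y < N → ∀ α ∈ ReqA φ (L x y),
            ∃ z, y < z ∧ z < N ∧ α ∈ Obs φ (L y z)
  fulB  : ∀ x y, x < y → y < N → ∀ α ∈ ReqB φ (L x y),
            ∃ z, x < z ∧ z < y ∧ α ∈ Obs φ (L x z)
  fulBb : ∀ x y, x < y → y < N → ∀ α ∈ ReqBb φ (L x y),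
            ∃ z, y < z ∧ z < N ∧ α ∈ Obs φ (L x z)
  fulLb : ∀ x y, x < y → y < N → ∀ α ∈ ReqLb φ (L x y),
            ∃ u v, u < v ∧ v < x ∧ α ∈ Obs φ (L u v)

/-- The shading of row `y`: the set of atoms occurring on row `y`. -/
def Shading (L : ℕ → ℕ → Set (Formula P)) (y : ℕ) : Set (Set (Formula P)) :=
  {F | ∃ x, x < y ∧ L x y = F}

/-- The property (WIT) of a set of points `W` being a witness set for row `y`:
every `ψ ∈ Cl(φ)` appearing in the label of a point above row `y` has a witness
in `W` at minimal height above `y`. -/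
def WitProp (φ : Formula P) (N : ℕ) (L : ℕ → ℕ → Set (Formula P)) (y : ℕ)
    (W : Set (ℕ × ℕ)) : Prop :=
  (∀ p ∈ W, p.1 < p.2 ∧ p.2 < N ∧ y < p.2) ∧
  ∀ ψ ∈ Cl φ, (∃ x' y', x' < y' ∧ y' < N ∧ y < y' ∧ ψ ∈ L x' y') →
    ∃ p ∈ W, ψ ∈ L p.1 p.2 ∧
      ∀ x' y', x' < y' → y' < N → y < y' → y' < p.2 → negc ψ ∈ L x' y'

/-- A witness set for row `y`: a minimal set satisfying (WIT). -/
def IsWitSet (φ : Formula P) (N : ℕ) (L : ℕ → ℕ → Set (Formula P)) (y : ℕ)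
    (W : Set (ℕ × ℕ)) : Prop :=
  WitProp φ N L y W ∧ ∀ W' ⊆ W, WitProp φ N L y W' → W' = W

/-- `π_ȳ(S)`: the `x`-coordinates, smaller than `ȳ`, of the points in `S`. -/
def proj (ybar : ℕ) (S : Set (ℕ × ℕ)) : Set ℕ := {x | (∃ y, (x, y) ∈ S) ∧ x < ybar}

/-- Two rows `y0 < y1` of a finite compass structure are compatible. -/
def Compatible (φ : Formula P) (N : ℕ) (L : ℕ → ℕ → Set (Formula P))
    (y0 y1 : ℕ) : Prop :=
  Shading L y0 = Shading L y1 ∧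
  L (y0 - 1) y0 = L (y1 - 1) y1 ∧
  ∃ W, IsWitSet φ N L y1 W ∧
    ∃ w : ℕ → ℕ, Set.InjOn w (proj y1 W) ∧
      ∀ x ∈ proj y1 W, w x < y0 ∧ L x y1 = L (w x) y0

/-- `#(F,y)`: the number of points on row `y` labeled by `F`. -/
noncomputable def cnt (L : ℕ → ℕ → Set (Formula P)) (y : ℕ) (F : Set (Formula P)) : ℕ :=
  Set.ncard {x | x < y ∧ L x y = F}

/-- The characteristic function of row `y`: counts occurrences of each atom,
capped at `2|φ|`. -/
noncomputable def charFn (φ : Formula P) (L : ℕ → ℕ → Set (Formula P)) (y : ℕ)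
    (F : Set (Formula P)) : ℕ :=
  min (cnt L y F) (2 * numSub φ)

/-- The formula `ξ = φ ∨ ⟨B̄⟩φ ∨ ⟨A⟩φ ∨ ⟨A⟩⟨A⟩φ`. -/
def xi (φ : Formula P) : Formula P :=
  Formula.or (Formula.or (Formula.or φ (Formula.diaBb φ)) (Formula.diaA φ))
    (Formula.diaA (Formula.diaA φ))

/-! ### Partially fulfilling structures and compass generators -/

/-- A finite compass structure of size `N` is partially fulfilling: every
request of a point strictly below the top row `N-1` is either fulfilled or
transferred to the border. -/
def PartFulfilling (φ : Formula P) (N : ℕ) (L : ℕ → ℕ → Set (Formula P)) : Prop :=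
  ∀ x y, x < y → y < N - 1 →
    (∀ ψ ∈ ReqA φ (L x y),
        (∃ z, y < z ∧ z < N ∧ ψ ∈ Obs φ (L y z)) ∨ ψ ∈ ReqBb φ (L y (N - 1))) ∧
    (∀ ψ ∈ ReqB φ (L x y), ∃ z, x < z ∧ z < y ∧ ψ ∈ Obs φ (L x z)) ∧
    (∀ ψ ∈ ReqBb φ (L x y),
        (∃ z, y < z ∧ z < N ∧ ψ ∈ Obs φ (L x z)) ∨ ψ ∈ ReqBb φ (L x (N - 1))) ∧
    (∀ ψ ∈ ReqLb φ (L x y),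
        (∃ u v, u < v ∧ v < x ∧ ψ ∈ Obs φ (L u v)) ∨ ψ ∈ ReqLb φ (L 0 1))

/-- The defining property of a future witness set for row `y`. -/
def FutWitProp (φ : Formula P) (N : ℕ) (L : ℕ → ℕ → Set (Formula P)) (y : ℕ)
    (FW : Set ℕ) : Prop :=
  (∀ x ∈ FW, x < y) ∧
  ∀ F ∈ Shading L y, ∃ x ∈ FW, L x y = F ∧
    ∀ ψ ∈ ReqBb φ F, ∃ y', y < y' ∧ y' < N ∧ ψ ∈ Obs φ (L x y')

/-- A future witness set for row `y`: a minimal set satisfying `FutWitProp`. -/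
def IsFutWit (φ : Formula P) (N : ℕ) (L : ℕ → ℕ → Set (Formula P)) (y : ℕ)
    (FW : Set ℕ) : Prop :=
  FutWitProp φ N L y FW ∧ ∀ FW' ⊆ FW, FutWitProp φ N L y FW' → FW' = FW

/-- The defining property of a past witness set for row `y`. -/
def PastWitProp (φ : Formula P) (N : ℕ) (L : ℕ → ℕ → Set (Formula P)) (y : ℕ)
    (PW : Set (ℕ × ℕ)) : Prop :=
  (∀ p ∈ PW, p.1 < p.2 ∧ p.2 < N) ∧
  ∀ ψ ∈ ReqLb φ (L (y - 1) y), ∃ p ∈ PW, ψ ∈ Obs φ (L p.1 p.2) ∧ p.2 < y - 1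

/-- A past witness set for row `y`: a minimal set satisfying `PastWitProp`. -/
def IsPastWit (φ : Formula P) (N : ℕ) (L : ℕ → ℕ → Set (Formula P)) (y : ℕ)
    (PW : Set (ℕ × ℕ)) : Prop :=
  PastWitProp φ N L y PW ∧ ∀ PW' ⊆ PW, PastWitProp φ N L y PW' → PW' = PW

/-- Conditions (G1)–(G6) on the four distinguished rows of a compass generator. -/
structure GenRows (φ : Formula P) (N : ℕ) (L : ℕ → ℕ → Set (Formula P))
    (yφ y0 y1 y2 : ℕ) : Prop where
  rowφpos : 0 < yφ
  rowφlt  : yφ < N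
  row0pos : 0 < y0
  row2lt  : y2 < N
  g1a : y0 < y1
  g1b : y1 < y2
  g1c : y0 ≤ yφ
  g2  : φ ∈ L (yφ - 1) yφ ∨ Formula.diaBb φ ∈ L (yφ - 1) yφ
  g3a : Shading L y1 ⊆ Shading L y0
  g3b : L (y0 - 1) y0 = L (y1 - 1) y1
  g4  : ∃ PW, IsPastWit φ N L y1 PW ∧ ∀ x ∈ proj y1 PW, y0 ≤ x
  g5a : Shading L (N - 1) ⊆ Shading L y2
  g5b : L (y2 - 1) y2 = L (N - 2) (N - 1)
  g6  : ∃ FW, IsFutWit φ N L y2 FW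

/-- A compass generator for `φ`: a finite, partially fulfilling compass
structure admitting four rows satisfying (G1)–(G6). -/
structure IsCompassGen (φ : Formula P) (N : ℕ) (L : ℕ → ℕ → Set (Formula P)) : Prop where
  pre     : IsPreCompass φ N L
  partFul : PartFulfilling φ N L
  rows    : ∃ yφ y0 y1 y2, GenRows φ N L yφ y0 y1 y2

/-- Global compatibility of two rows `y < y'` of a compass generator with
distinguished rows `yφ, y0, y1, y2`. -/
def GlobCompatible (φ : Formula P) (N : ℕ) (L : ℕ → ℕ → Set (Formula P))
    (yφ y0 y1 y2 y y' : ℕ) : Prop :=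
  L (y - 1) y = L (y' - 1) y' ∧ Shading L y = Shading L y' ∧
  (∀ ybar ∈ ({yφ, y0, y1, y2} : Set ℕ), ¬ (y ≤ ybar ∧ ybar ≤ y')) ∧
  ∃ PW FW,
    IsPastWit φ N L y1 PW ∧
    (∀ p ∈ PW, ¬ (y ≤ p.2 ∧ p.2 ≤ y')) ∧
    IsFutWit φ N L y2 FW ∧
    (∀ xbar ∈ FW, ∀ ψ ∈ ReqBb φ (L xbar y2),
      ∃ ybar, y2 < ybar ∧ ybar < N ∧ ψ ∈ Obs φ (L xbar ybar) ∧ ¬ (y ≤ ybar ∧ ybar ≤ y')) ∧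
    ∃ W, IsWitSet φ N L y' W ∧
      ∃ w : ℕ → ℕ,
        Set.InjOn w (proj y' (W ∪ PW ∪ (fun x => (x, y2)) '' FW)) ∧
        (∀ x ∈ proj y' (W ∪ PW ∪ (fun x => (x, y2)) '' FW),
          w x < y ∧ L x y' = L (w x) y) ∧
        (∀ x ∈ proj y' PW, w x = x)

/-! The `ξ`-types of the intervals of a finite model, read along an enumeration `Fin N ≃o O`,
form a finite compass structure. Conversely, in a finite compass structure consistency and
fulfilment say exactly that `⟨R⟩α` belongs to the atom at `p` iff `α` belongs to the atom at
some `R`-successor of `p`, so by the truth lemma the propositional part of the labelling is a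
model in which every point satisfies precisely the closure formulas of its atom. Finally, `ξ`
holds on the initial interval `[0,1]` iff `φ` holds somewhere: every interval begins at `0`,
at `1`, or after `1`. -/

section Closure

variable {ξ α β ψ : Formula P}

lemma mem_subf_self (φ : Formula P) : φ ∈ subf φ := by
  cases φ <;> simp [subf]

lemma subf_subset_of_mem {φ : Formula P} (h : ψ ∈ subf φ) : subf ψ ⊆ subf φ := by
  induction φ with
  | atom a => rw [Set.mem_singleton_iff.1 h]
  | neg χ ih | diaA χ ih | diaB χ ih | diaBb χ ih | diaLb χ ih =>
    rcases h with rfl | h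
    · rfl
    · exact (ih h).trans (Set.subset_insert _ _)
  | or χ₁ χ₂ ih₁ ih₂ =>
    rcases h with rfl | h | h
    · rfl
    · exact (ih₁ h).trans (Set.subset_union_left.trans (Set.subset_insert _ _))
    · exact (ih₂ h).trans (Set.subset_union_right.trans (Set.subset_insert _ _))

lemma mem_cl_self (ξ : Formula P) : ξ ∈ Cl ξ := Or.inl (mem_subf_self ξ)

lemma negc_cases (β : Formula P) :
    (∃ γ, β = Formula.neg γ ∧ negc β = γ) ∨ negc β = Formula.neg β := by
  cases β
  case neg γ => exact Or.inl ⟨γ, rfl, rfl⟩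
  all_goals exact Or.inr rfl

lemma subf_subset_cl (h : ψ ∈ Cl ξ) : subf ψ ⊆ Cl ξ := by
  rcases h with h | ⟨β, hβ, rfl⟩
  · exact (subf_subset_of_mem h).trans Set.subset_union_left
  · rcases negc_cases β with ⟨γ, rfl, hγ⟩ | hβ'
    · rw [hγ]
      exact (subf_subset_of_mem (subf_subset_of_mem hβ (by simp [subf, mem_subf_self]))).trans
        Set.subset_union_left
    · rw [hβ', subf, Set.insert_subset_iff]
      exact ⟨Or.inr ⟨β, hβ, hβ'⟩, (subf_subset_of_mem hβ).trans Set.subset_union_left⟩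

lemma negc_mem_cl (h : α ∈ Cl ξ) : negc α ∈ Cl ξ := by
  rcases h with h | ⟨β, hβ, rfl⟩
  · exact Or.inr ⟨α, h, rfl⟩
  · rcases negc_cases β with ⟨γ, rfl, hγ⟩ | hβ'
    · rw [hγ]
      exact Or.inr ⟨γ, subf_subset_of_mem hβ (by simp [subf, mem_subf_self]), rfl⟩
    · rw [hβ']
      exact Or.inl hβ

lemma cl_subset_clp : Cl ξ ⊆ Clp ξ := Set.subset_union_left

lemma diaA_mem_clp (h : α ∈ Cl ξ) : Formula.diaA α ∈ Clp ξ := Or.inr ⟨α, h, by simp⟩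

lemma diaB_mem_clp (h : α ∈ Cl ξ) : Formula.diaB α ∈ Clp ξ := Or.inr ⟨α, h, by simp⟩

lemma diaBb_mem_clp (h : α ∈ Cl ξ) : Formula.diaBb α ∈ Clp ξ := Or.inr ⟨α, h, by simp⟩

lemma diaLb_mem_clp (h : α ∈ Cl ξ) : Formula.diaLb α ∈ Clp ξ := Or.inr ⟨α, h, by simp⟩

lemma negc_mem_clp (h : α ∈ Clp ξ) : negc α ∈ Clp ξ := by
  rcases h with h | ⟨β, hβ, h⟩
  · exact cl_subset_clp (negc_mem_cl h)
  · refine Or.inr ⟨β, hβ, ?_⟩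
    rcases h with rfl | rfl | rfl | rfl | rfl | rfl | rfl | rfl <;> simp [negc]

lemma or_mem_cl_of_mem_clp (h : Formula.or α β ∈ Clp ξ) : Formula.or α β ∈ Cl ξ := by
  rcases h with h | ⟨γ, -, h⟩
  · exact h
  · simp at h

end Closure

section Types

variable {O : Type} [LinearOrder O] {σ : Interval O → Set P} {ξ α : Formula P}

lemma sat_negc (σ : Interval O → Set P) (α : Formula P) (I : Interval O) :
    sat σ (negc α) I ↔ ¬ sat σ α I := by
  rcases negc_cases α with ⟨γ, rfl, hγ⟩ | hα
  · rw [hγ]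
    exact not_not.symm
  · rw [hα]
    rfl

lemma exists_start_eq_iff (J : Interval O) (p : Interval O → Prop) :
    (∃ K, J.1.1 = K.1.1 ∧ p K) ↔ p J ∨ (∃ K, relB J K ∧ p K) ∨ ∃ K, relBb J K ∧ p K := by
  constructor
  · rintro ⟨K, hJK, hK⟩
    rcases lt_trichotomy K.1.2 J.1.2 with h | h | h
    · exact Or.inr (Or.inl ⟨K, ⟨hJK, h⟩, hK⟩)
    · obtain rfl : K = J := Subtype.ext (Prod.ext hJK.symm h)
      exact Or.inl hK
    · exact Or.inr (Or.inr ⟨K, ⟨hJK, h⟩, hK⟩)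
  · rintro (hJ | ⟨K, hJK, hK⟩ | ⟨K, hJK, hK⟩)
    exacts [⟨J, rfl, hJ⟩, ⟨K, hJK.1, hK⟩, ⟨K, hJK.1, hK⟩]

lemma mem_obs_typeS {I : Interval O} : α ∈ Obs ξ (TypeS σ ξ I) ↔ α ∈ Cl ξ ∧ sat σ α I :=
  ⟨fun h => ⟨h.2, h.1.2⟩, fun h => ⟨⟨cl_subset_clp h.1, h.2⟩, h.1⟩⟩

lemma mem_reqA_typeS {I : Interval O} :
    α ∈ ReqA ξ (TypeS σ ξ I) ↔ α ∈ Cl ξ ∧ ∃ J, relA I J ∧ sat σ α J :=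
  ⟨fun h => ⟨h.1, h.2.2⟩, fun h => ⟨h.1, diaA_mem_clp h.1, h.2⟩⟩

lemma mem_reqB_typeS {I : Interval O} :
    α ∈ ReqB ξ (TypeS σ ξ I) ↔ α ∈ Cl ξ ∧ ∃ J, relB I J ∧ sat σ α J :=
  ⟨fun h => ⟨h.1, h.2.2⟩, fun h => ⟨h.1, diaB_mem_clp h.1, h.2⟩⟩

lemma mem_reqBb_typeS {I : Interval O} :
    α ∈ ReqBb ξ (TypeS σ ξ I) ↔ α ∈ Cl ξ ∧ ∃ J, relBb I J ∧ sat σ α J :=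
  ⟨fun h => ⟨h.1, h.2.2⟩, fun h => ⟨h.1, diaBb_mem_clp h.1, h.2⟩⟩

lemma mem_reqLb_typeS {I : Interval O} :
    α ∈ ReqLb ξ (TypeS σ ξ I) ↔ α ∈ Cl ξ ∧ ∃ J, relLb I J ∧ sat σ α J :=
  ⟨fun h => ⟨h.1, h.2.2⟩, fun h => ⟨h.1, diaLb_mem_clp h.1, h.2⟩⟩

lemma isAtom_typeS (σ : Interval O → Set P) (ξ : Formula P) (I : Interval O) :
    IsAtom ξ (TypeS σ ξ I) where
  nonempty := by
    have hξ : ξ ∈ Clp ξ := cl_subset_clp (mem_cl_self ξ)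
    by_cases h : sat σ ξ I
    · exact ⟨ξ, hξ, h⟩
    · exact ⟨negc ξ, negc_mem_clp hξ, (sat_negc σ ξ I).2 h⟩
  subset _ h := h.1
  negCond α hα := by
    simp only [TypeS, Set.mem_ofPred_eq, sat_negc, negc_mem_clp hα, hα, true_and, not_not]
  orCond α β h := by
    have hαβ := subf_subset_cl (or_mem_cl_of_mem_clp h)
    have hα : α ∈ Clp ξ := cl_subset_clp (hαβ (by simp [subf, mem_subf_self]))
    have hβ : β ∈ Clp ξ := cl_subset_clp (hαβ (by simp [subf, mem_subf_self]))
    simp only [TypeS, Set.mem_ofPred_eq, sat, h, hα, hβ, true_and]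

lemma depA_typeS {I J : Interval O} (h : relA I J) :
    DepA ξ (TypeS σ ξ I) (TypeS σ ξ J) := by
  have hIJ : I.1.2 = J.1.1 := h
  ext α
  simp only [Set.mem_union, mem_reqA_typeS, mem_obs_typeS, mem_reqB_typeS, mem_reqBb_typeS,
    relA, hIJ, exists_start_eq_iff, ← and_or_left, or_assoc]

lemma depB_typeS {I J : Interval O} (h : relB I J) :
    DepB ξ (TypeS σ ξ I) (TypeS σ ξ J) := by
  obtain ⟨hIJ, hJI⟩ := h
  refine ⟨?_, ?_, ?_, ?_, ?_⟩
  · intro α hα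
    rw [Set.mem_union, mem_obs_typeS, mem_reqBb_typeS] at hα
    rcases hα with ⟨hα, hI⟩ | ⟨hα, K, ⟨hIK, hK⟩, hsat⟩
    exacts [mem_reqBb_typeS.2 ⟨hα, I, ⟨hIJ.symm, hJI⟩, hI⟩,
      mem_reqBb_typeS.2 ⟨hα, K, ⟨hIJ.symm.trans hIK, hJI.trans hK⟩, hsat⟩]
  · intro α hα
    obtain ⟨hα, K, ⟨hJK, -⟩, hsat⟩ := mem_reqBb_typeS.1 hα
    have := (exists_start_eq_iff I (sat σ α)).1 ⟨K, hIJ.trans hJK, hsat⟩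
    simp only [Set.mem_union, mem_obs_typeS, mem_reqBb_typeS, mem_reqB_typeS, hα, true_and]
    rcases this with h | h | h <;> simp only [h, true_or, or_true]
  · intro α hα
    rw [Set.mem_union, mem_obs_typeS, mem_reqB_typeS] at hα
    rcases hα with ⟨hα, hJ⟩ | ⟨hα, K, ⟨hJK, hK⟩, hsat⟩
    exacts [mem_reqB_typeS.2 ⟨hα, J, ⟨hIJ, hJI⟩, hJ⟩,
      mem_reqB_typeS.2 ⟨hα, K, ⟨hIJ.trans hJK, hK.trans hJI⟩, hsat⟩]
  · intro α hα
    obtain ⟨hα, K, ⟨hIK, -⟩, hsat⟩ := mem_reqB_typeS.1 hα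
    have := (exists_start_eq_iff J (sat σ α)).1 ⟨K, hIJ.symm.trans hIK, hsat⟩
    simp only [Set.mem_union, mem_obs_typeS, mem_reqBb_typeS, mem_reqB_typeS, hα, true_and]
    rcases this with h | h | h <;> simp only [h, true_or, or_true]
  · ext α
    simp only [mem_reqLb_typeS, relLb, hIJ]

lemma depLb_typeS {I J : Interval O} (h : relLb I J) :
    DepLb ξ (TypeS σ ξ I) (TypeS σ ξ J) := by
  rintro α (hα | hα)
  · rw [mem_obs_typeS] at hα
    exact mem_reqLb_typeS.2 ⟨hα.1, J, h, hα.2⟩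
  · obtain ⟨hα, K, hJK, hK⟩ := mem_reqLb_typeS.1 hα
    exact mem_reqLb_typeS.2 ⟨hα, K, hJK.trans (J.2.trans h), hK⟩

end Types

section Compass

variable {O : Type} [LinearOrder O] {ξ α : Formula P}

theorem isCompass_typeS (σ : Interval O → Set P) (ξ : Formula P) :
    IsCompass ξ (TypeS σ ξ) where
  isAtom := isAtom_typeS σ ξ
  consA _ _ := depA_typeS
  consB _ _ := depB_typeS
  consLb _ _ := depLb_typeS
  fulA I α hα := by
    obtain ⟨hα, J, hIJ, hJ⟩ := mem_reqA_typeS.1 hα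
    exact ⟨J, hIJ, mem_obs_typeS.2 ⟨hα, hJ⟩⟩
  fulB I α hα := by
    obtain ⟨hα, J, hIJ, hJ⟩ := mem_reqB_typeS.1 hα
    exact ⟨J, hIJ, mem_obs_typeS.2 ⟨hα, hJ⟩⟩
  fulBb I α hα := by
    obtain ⟨hα, J, hIJ, hJ⟩ := mem_reqBb_typeS.1 hα
    exact ⟨J, hIJ, mem_obs_typeS.2 ⟨hα, hJ⟩⟩
  fulLb I α hα := by
    obtain ⟨hα, J, hIJ, hJ⟩ := mem_reqLb_typeS.1 hα
    exact ⟨J, hIJ, mem_obs_typeS.2 ⟨hα, hJ⟩⟩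

namespace IsCompass

variable {L : Interval O → Set (Formula P)}

lemma diaA_mem_iff (hC : IsCompass ξ L) (hα : α ∈ Cl ξ) (I : Interval O) :
    Formula.diaA α ∈ L I ↔ ∃ J, relA I J ∧ α ∈ L J := by
  constructor
  · intro h
    obtain ⟨J, hIJ, hJ, -⟩ := hC.fulA I α ⟨hα, h⟩
    exact ⟨J, hIJ, hJ⟩
  · rintro ⟨J, hIJ, hJ⟩
    have : α ∈ ReqA ξ (L I) := (hC.consA I J hIJ).symm ▸ Or.inl (Or.inl ⟨hJ, hα⟩)
    exact this.2

lemma diaB_mem_iff (hC : IsCompass ξ L) (hα : α ∈ Cl ξ) (I : Interval O) :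
    Formula.diaB α ∈ L I ↔ ∃ J, relB I J ∧ α ∈ L J := by
  constructor
  · intro h
    obtain ⟨J, hIJ, hJ, -⟩ := hC.fulB I α ⟨hα, h⟩
    exact ⟨J, hIJ, hJ⟩
  · rintro ⟨J, hIJ, hJ⟩
    exact ((hC.consB I J hIJ).2.2.1 (Or.inl ⟨hJ, hα⟩)).2

lemma diaBb_mem_iff (hC : IsCompass ξ L) (hα : α ∈ Cl ξ) (I : Interval O) :
    Formula.diaBb α ∈ L I ↔ ∃ J, relBb I J ∧ α ∈ L J := by
  constructor
  · intro h
    obtain ⟨J, hIJ, hJ, -⟩ := hC.fulBb I α ⟨hα, h⟩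
    exact ⟨J, hIJ, hJ⟩
  · rintro ⟨J, ⟨hIJ, hJI⟩, hJ⟩
    exact ((hC.consB J I ⟨hIJ.symm, hJI⟩).1 (Or.inl ⟨hJ, hα⟩)).2

lemma diaLb_mem_iff (hC : IsCompass ξ L) (hα : α ∈ Cl ξ) (I : Interval O) :
    Formula.diaLb α ∈ L I ↔ ∃ J, relLb I J ∧ α ∈ L J := by
  constructor
  · intro h
    obtain ⟨J, hIJ, hJ, -⟩ := hC.fulLb I α ⟨hα, h⟩
    exact ⟨J, hIJ, hJ⟩
  · rintro ⟨J, hIJ, hJ⟩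
    exact ((hC.consLb I J hIJ) (Or.inl ⟨hJ, hα⟩)).2

theorem mem_iff_sat (hC : IsCompass ξ L) (hα : α ∈ Cl ξ) (I : Interval O) :
    α ∈ L I ↔ sat (fun J => {a | Formula.atom a ∈ L J}) α I := by
  induction α generalizing I with
  | atom a => rfl
  | neg ψ ih =>
    rw [(hC.isAtom I).negCond _ (cl_subset_clp hα)]
    exact not_congr (ih (subf_subset_cl hα (by simp [subf, mem_subf_self])) I)
  | or ψ χ ih₁ ih₂ =>
    rw [(hC.isAtom I).orCond ψ χ (cl_subset_clp hα)]
    exact or_congr (ih₁ (subf_subset_cl hα (by simp [subf, mem_subf_self])) I)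
      (ih₂ (subf_subset_cl hα (by simp [subf, mem_subf_self])) I)
  | diaA ψ ih =>
    have hψ : ψ ∈ Cl ξ := subf_subset_cl hα (by simp [subf, mem_subf_self])
    rw [hC.diaA_mem_iff hψ]
    exact exists_congr fun J => and_congr_right fun _ => ih hψ J
  | diaB ψ ih =>
    have hψ : ψ ∈ Cl ξ := subf_subset_cl hα (by simp [subf, mem_subf_self])
    rw [hC.diaB_mem_iff hψ]
    exact exists_congr fun J => and_congr_right fun _ => ih hψ J
  | diaBb ψ ih =>
    have hψ : ψ ∈ Cl ξ := subf_subset_cl hα (by simp [subf, mem_subf_self])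
    rw [hC.diaBb_mem_iff hψ]
    exact exists_congr fun J => and_congr_right fun _ => ih hψ J
  | diaLb ψ ih =>
    have hψ : ψ ∈ Cl ξ := subf_subset_cl hα (by simp [subf, mem_subf_self])
    rw [hC.diaLb_mem_iff hψ]
    exact exists_congr fun J => and_congr_right fun _ => ih hψ J

end IsCompass

end Compass

section Models

variable {O : Type} [LinearOrder O]

lemma sat_xi_iff {σ : Interval O → Set P} {φ : Formula P} {I : Interval O}
    (hbot : IsBot I.1.1) (hcov : I.1.1 ⋖ I.1.2) :
    sat σ (xi φ) I ↔ ∃ J, sat σ φ J := by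
  constructor
  · rintro (((h | ⟨J, -, h⟩) | ⟨J, -, h⟩) | ⟨-, -, J, -, h⟩)
    exacts [⟨I, h⟩, ⟨J, h⟩, ⟨J, h⟩, ⟨J, h⟩]
  · rintro ⟨J, hJ⟩
    rcases (hbot J.1.1).lt_or_eq with h0 | h0
    · rcases (hcov.ge_of_gt h0).lt_or_eq with h1 | h1
      · exact Or.inr ⟨⟨(I.1.2, J.1.1), h1⟩, rfl, J, rfl, hJ⟩
      · exact Or.inl (Or.inr ⟨J, h1, hJ⟩)
    · rcases (hcov.ge_of_gt (h0.trans_lt J.2)).lt_or_eq with h1 | h1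
      · exact Or.inl (Or.inl (Or.inr ⟨J, ⟨h0, h1⟩, hJ⟩))
      · obtain rfl : J = I := Subtype.ext (Prod.ext h0.symm h1.symm)
        exact Or.inl (Or.inl (Or.inl hJ))

def intervalCongr {O' : Type} [LinearOrder O'] (e : O' ≃o O) : Interval O' ≃ Interval O where
  toFun I := ⟨(e I.1.1, e I.1.2), e.lt_iff_lt.2 I.2⟩
  invFun I := ⟨(e.symm I.1.1, e.symm I.1.2), e.symm.lt_iff_lt.2 I.2⟩
  left_inv _ := Subtype.ext (Prod.ext (e.symm_apply_apply _) (e.symm_apply_apply _))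
  right_inv _ := Subtype.ext (Prod.ext (e.apply_symm_apply _) (e.apply_symm_apply _))

lemma intervalCongr_fst {O' : Type} [LinearOrder O'] (e : O' ≃o O) (I : Interval O') :
    (intervalCongr e I).1.1 = e I.1.1 := rfl

lemma intervalCongr_snd {O' : Type} [LinearOrder O'] (e : O' ≃o O) (I : Interval O') :
    (intervalCongr e I).1.2 = e I.1.2 := rfl

lemma sat_comp_intervalCongr {O' : Type} [LinearOrder O'] (e : O' ≃o O)
    (σ : Interval O → Set P) (α : Formula P) (I : Interval O') :
    sat (σ ∘ intervalCongr e) α I ↔ sat σ α (intervalCongr e I) := by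
  induction α generalizing I with
  | atom a => rfl
  | neg ψ ih => exact not_congr (ih I)
  | or ψ χ ih₁ ih₂ => exact or_congr (ih₁ I) (ih₂ I)
  | diaA ψ ih | diaB ψ ih | diaBb ψ ih | diaLb ψ ih =>
    exact (intervalCongr e).exists_congr fun J =>
      and_congr (by simp [relA, relB, relBb, relLb, intervalCongr_fst, intervalCongr_snd]) (ih J)

end Models

section FinCompass

variable {N : ℕ} {ξ : Formula P}

def finInterval {x y : ℕ} (hxy : x < y) (hy : y < N) : Interval (Fin N) :=
  ⟨(⟨x, hxy.trans hy⟩, ⟨y, hy⟩), hxy⟩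

lemma isBot_and_covBy_finInterval_zero_one (hN : 1 < N) :
    IsBot (finInterval zero_lt_one hN).1.1 ∧
      (finInterval zero_lt_one hN).1.1 ⋖ (finInterval zero_lt_one hN).1.2 :=
  ⟨fun z => Nat.zero_le z.1, Fin.covBy_iff.2 (Nat.covBy_iff_add_one_eq.2 rfl)⟩

theorem IsFinCompass.isCompass {L : ℕ → ℕ → Set (Formula P)} (hC : IsFinCompass ξ N L) :
    IsCompass ξ (fun I : Interval (Fin N) => L I.1.1 I.1.2) where
  isAtom I := hC.isAtom _ _ I.2 I.1.2.isLt
  consA I J hIJ := by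
    have := hC.consA I.1.1 I.1.2 J.1.2 I.2 (hIJ ▸ J.2) J.1.2.isLt
    rwa [hIJ] at this ⊢
  consB I J hIJ := by
    have := hC.consB I.1.1 J.1.2 I.1.2 (hIJ.1 ▸ J.2) hIJ.2 I.1.2.isLt
    rwa [hIJ.1] at this ⊢
  consLb I J hIJ := hC.consLb J.1.1 J.1.2 I.1.1 I.1.2 J.2 hIJ I.2 I.1.2.isLt
  fulA I α hα := by
    obtain ⟨z, hyz, hz, hobs⟩ := hC.fulA _ _ I.2 I.1.2.isLt α hα
    exact ⟨⟨(I.1.2, ⟨z, hz⟩), hyz⟩, rfl, hobs⟩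
  fulB I α hα := by
    obtain ⟨z, hxz, hzy, hobs⟩ := hC.fulB _ _ I.2 I.1.2.isLt α hα
    exact ⟨⟨(I.1.1, ⟨z, hzy.trans I.1.2.isLt⟩), hxz⟩, ⟨rfl, hzy⟩, hobs⟩
  fulBb I α hα := by
    obtain ⟨z, hyz, hz, hobs⟩ := hC.fulBb _ _ I.2 I.1.2.isLt α hα
    exact ⟨⟨(I.1.1, ⟨z, hz⟩), I.2.trans hyz⟩, ⟨rfl, hyz⟩, hobs⟩
  fulLb I α hα := by
    obtain ⟨u, v, huv, hvx, hobs⟩ := hC.fulLb _ _ I.2 I.1.2.isLt α hα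
    have hvN : v < N := hvx.trans I.1.1.isLt
    exact ⟨⟨(⟨u, huv.trans hvN⟩, ⟨v, hvN⟩), huv⟩, hvx, hobs⟩

theorem IsCompass.isFinCompass {L : ℕ → ℕ → Set (Formula P)}
    (hC : IsCompass ξ (fun I : Interval (Fin N) => L I.1.1 I.1.2)) : IsFinCompass ξ N L where
  isAtom _ _ hxy hy := hC.isAtom (finInterval hxy hy)
  consA _ _ _ hxy hyz hz := hC.consA (finInterval hxy (hyz.trans hz)) (finInterval hyz hz) rfl
  consB _ _ _ hxz hzy hy :=
    hC.consB (finInterval (hxz.trans hzy) hy) (finInterval hxz (hzy.trans hy)) ⟨rfl, hzy⟩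
  consLb _ _ _ _ huv hvx hxy hy :=
    hC.consLb (finInterval hxy hy) (finInterval huv ((hvx.trans hxy).trans hy)) hvx
  fulA x y hxy hy α hα := by
    obtain ⟨⟨⟨⟨y', _⟩, ⟨z, hz⟩⟩, hyz⟩, hJ, hobs⟩ := hC.fulA (finInterval hxy hy) α hα
    obtain rfl : y = y' := congrArg Fin.val hJ
    exact ⟨z, hyz, hz, hobs⟩
  fulB x y hxy hy α hα := by
    obtain ⟨⟨⟨⟨x', _⟩, ⟨z, _⟩⟩, hxz⟩, ⟨hJ, hzy⟩, hobs⟩ := hC.fulB (finInterval hxy hy) α hα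
    obtain rfl : x = x' := congrArg Fin.val hJ
    exact ⟨z, hxz, hzy, hobs⟩
  fulBb x y hxy hy α hα := by
    obtain ⟨⟨⟨⟨x', _⟩, ⟨z, hz⟩⟩, _⟩, ⟨hJ, hyz⟩, hobs⟩ := hC.fulBb (finInterval hxy hy) α hα
    obtain rfl : x = x' := congrArg Fin.val hJ
    exact ⟨z, hyz, hz, hobs⟩
  fulLb x y hxy hy α hα := by
    obtain ⟨⟨⟨⟨u, _⟩, ⟨v, _⟩⟩, huv⟩, hvx, hobs⟩ := hC.fulLb (finInterval hxy hy) α hα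
    exact ⟨u, v, huv, hvx, hobs⟩

def typeLabel (σ : Interval (Fin N) → Set P) (ξ : Formula P) (x y : ℕ) : Set (Formula P) :=
  if h : x < y ∧ y < N then TypeS σ ξ (finInterval h.1 h.2) else ∅

lemma typeLabel_apply (σ : Interval (Fin N) → Set P) (ξ : Formula P) (I : Interval (Fin N)) :
    typeLabel σ ξ I.1.1 I.1.2 = TypeS σ ξ I :=
  dif_pos ⟨I.2, I.1.2.isLt⟩

theorem isFinCompass_typeLabel (σ : Interval (Fin N) → Set P) (ξ : Formula P) :
    IsFinCompass ξ N (typeLabel σ ξ) := by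
  apply IsCompass.isFinCompass
  simpa only [typeLabel_apply] using isCompass_typeS σ ξ

lemma one_lt_of_interval (J : Interval (Fin N)) : 1 < N := by
  have hJ : (J.1.1 : ℕ) < J.1.2 := J.2
  have := J.1.2.isLt
  omega

theorem exists_isFinCompass_of_sat {σ : Interval (Fin N) → Set P} {φ : Formula P}
    {J : Interval (Fin N)} (hJ : sat σ φ J) :
    ∃ L, 1 < N ∧ IsFinCompass (xi φ) N L ∧ xi φ ∈ L 0 1 := by
  have hN := one_lt_of_interval J
  obtain ⟨hbot, hcov⟩ := isBot_and_covBy_finInterval_zero_one hN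
  refine ⟨typeLabel σ (xi φ), hN, isFinCompass_typeLabel σ (xi φ), ?_⟩
  rw [typeLabel, dif_pos ⟨zero_lt_one, hN⟩]
  exact ⟨cl_subset_clp (mem_cl_self _), (sat_xi_iff hbot hcov).2 ⟨J, hJ⟩⟩

end FinCompass

/-- An ABB̄L̄-formula `φ` is satisfiable over a finite interval
structure iff `ξ = φ ∨ ⟨B̄⟩φ ∨ ⟨A⟩φ ∨ ⟨A⟩⟨A⟩φ` belongs to the atom labeling the
initial point `(0,1)` of some finite compass structure. -/
theorem finite_sat_iff_initial {P : Type} (φ : Formula P) :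
    (∃ (O : Type) (_ : LinearOrder O) (_ : Finite O)
       (σ : Interval O → Set P) (I : Interval O), sat σ φ I) ↔
    (∃ (N : ℕ) (L : ℕ → ℕ → Set (Formula P)),
       1 < N ∧ IsFinCompass (xi φ) N L ∧ xi φ ∈ L 0 1) := by
  constructor
  · rintro ⟨O, _, _, σ, I, hI⟩
    have : Fintype O := Fintype.ofFinite O
    let e := intervalCongr (monoEquivOfFin O rfl)
    have hJ : sat (σ ∘ e) φ (e.symm I) := by
      rwa [sat_comp_intervalCongr, Equiv.apply_symm_apply]
    exact ⟨_, exists_isFinCompass_of_sat hJ⟩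
  · rintro ⟨N, L, hN, hC, hξ⟩
    obtain ⟨hbot, hcov⟩ := isBot_and_covBy_finInterval_zero_one hN
    have hsat :=
      (hC.isCompass.mem_iff_sat (mem_cl_self _) (finInterval zero_lt_one hN)).1 hξ
    exact ⟨Fin N, inferInstance, inferInstance, _, (sat_xi_iff hbot hcov).1 hsat⟩

end ABBL
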